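/- Let ρ > 0, ν > 0, c > 0, N₀ ∈ ℝ. Then N(t) = N₀ Γ(ρ) t^{ρ-1} E_{ν,ρ}(-(ct)^ν), where E_{ν,ρ} is the two-parameter Mittag-Leffler function, satisfies N(t) - N₀ t^{ρ-1} = -c^ν (₀D_t^{-ν} N)(t) for all t > 0. -/

import Mathlib

/-!
Expand `t ^ (ρ - 1) * E_{ν,ρ}(a t ^ ν)` as the power series `∑ aᵏ t^(νk+ρ-1) / Γ(νk+ρ)`.
By the Beta integral, the Riemann–Liouville integral of order `ν` sends `t ^ (β - 1)` to
`Γ(β) / Γ(β + ν) * t ^ (β + ν - 1)`, and the series may be integrated term by term because it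
converges absolutely. Multiplying the result by `a` shifts the index of the Mittag-Leffler
series by one, so it reproduces the original series minus its constant term `1 / Γ(ρ)`.
-/

open MeasureTheory Real

/-- Two-parameter Mittag-Leffler function (real argument). -/
noncomputable def mittagLeffler2 (α β : ℝ) (z : ℝ) : ℝ :=
  ∑' k : ℕ, z ^ k / Real.Gamma (α * k + β)

/-- Riemann–Liouville fractional integral of order ν. -/
noncomputable def rlInt (ν : ℝ) (f : ℝ → ℝ) (t : ℝ) : ℝ :=
  (1 / Real.Gamma ν) * ∫ u in (0:ℝ)..t, (t - u) ^ (ν - 1) * f u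

open Filter Set

theorem Real.Gamma_mul_rpow_le_Gamma_add {y ν : ℝ} (hy : 1 < y) (hν : 0 < ν) :
    Gamma y * (y - 1) ^ ν ≤ Gamma (y + ν) := by
  have hy₁ : 0 < y - 1 := by linarith
  have hslope := convexOn_log_Gamma.slope_mono_adjacent (x := y - 1) (y := y) (z := y + ν)
    (mem_Ioi.2 hy₁) (mem_Ioi.2 (by linarith)) (by linarith) (by linarith)
  have hrec : Gamma y = (y - 1) * Gamma (y - 1) := by
    simpa using Gamma_add_one hy₁.ne'
  simp only [Function.comp_apply, sub_sub_cancel, div_one, add_sub_cancel_left,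
    le_div_iff₀ hν, hrec, log_mul hy₁.ne' (Gamma_pos_of_pos hy₁).ne'] at hslope
  rw [← log_le_log_iff (by positivity) (by positivity), log_mul (by positivity)
    (by positivity), log_rpow hy₁, hrec, log_mul hy₁.ne' (Gamma_pos_of_pos hy₁).ne']
  linarith

theorem summable_pow_div_Gamma {ν : ℝ} (hν : 0 < ν) (ρ z : ℝ) :
    Summable fun k : ℕ => z ^ k / Gamma (ν * k + ρ) := by
  have hy : Tendsto (fun k : ℕ => ν * k + ρ) atTop atTop :=
    tendsto_atTop_add_const_right _ ρ (tendsto_natCast_atTop_atTop.const_mul_atTop hν)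
  have hgrowth : Tendsto (fun k : ℕ => (ν * k + ρ - 1) ^ ν) atTop atTop :=
    (tendsto_rpow_atTop hν).comp (tendsto_atTop_add_const_right _ (-1) hy)
  -- ratio test: by log-convexity of `Γ` the ratio of consecutive terms is `≤ |z| / (νk+ρ-1)^ν`
  refine summable_of_ratio_norm_eventually_le (r := 1 / 2) (by norm_num) ?_
  filter_upwards [hy.eventually_ge_atTop 2, hgrowth.eventually_ge_atTop (2 * |z|)] with k hk hz
  have hΓ : 0 < Gamma (ν * k + ρ) := Gamma_pos_of_pos (by linarith)
  have hΓ_succ : 0 < Gamma (ν * k + ρ + ν) := Gamma_pos_of_pos (by linarith)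
  have hsucc : ν * ↑(k + 1) + ρ = ν * k + ρ + ν := by push_cast; ring
  rw [hsucc, norm_div, norm_div, norm_pow, norm_pow, Real.norm_eq_abs, Real.norm_of_nonneg hΓ.le,
    Real.norm_of_nonneg hΓ_succ.le, div_le_iff₀ hΓ_succ]
  calc |z| ^ (k + 1) = |z| ^ k * |z| := pow_succ _ _
    _ ≤ |z| ^ k * (1 / 2 * (ν * k + ρ - 1) ^ ν) := by gcongr; linarith
    _ = 1 / 2 * (|z| ^ k / Gamma (ν * k + ρ)) * (Gamma (ν * k + ρ) * (ν * k + ρ - 1) ^ ν) := by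
      field_simp
    _ ≤ 1 / 2 * (|z| ^ k / Gamma (ν * k + ρ)) * Gamma (ν * k + ρ + ν) := by
      gcongr
      exact Gamma_mul_rpow_le_Gamma_add (by linarith) hν

theorem integral_sub_rpow_mul_rpow {a b t : ℝ} (ha : 0 < a) (hb : 0 < b) (ht : 0 < t) :
    ∫ u in (0 : ℝ)..t, (t - u) ^ (a - 1) * u ^ (b - 1) =
      Gamma a * Gamma b / Gamma (a + b) * t ^ (a + b - 1) := by
  have hcongr : EqOn (fun u : ℝ => (((t - u) ^ (a - 1) * u ^ (b - 1) : ℝ) : ℂ))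
      (fun u : ℝ => (u : ℂ) ^ ((b : ℂ) - 1) * ((t : ℂ) - u) ^ ((a : ℂ) - 1)) (uIcc 0 t) := by
    intro u hu
    rw [uIcc_of_le ht.le] at hu
    push_cast
    rw [Complex.ofReal_cpow (sub_nonneg.2 hu.2), Complex.ofReal_cpow hu.1]
    push_cast
    ring
  have hB : Complex.betaIntegral b a = ((Gamma a * Gamma b / Gamma (a + b) : ℝ) : ℂ) := by
    have h := Complex.Gamma_mul_Gamma_eq_betaIntegral (s := (b : ℂ)) (t := (a : ℂ))
      (by simpa using hb) (by simpa using ha)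
    have hΓ : ((Gamma (a + b) : ℝ) : ℂ) ≠ 0 := Complex.ofReal_ne_zero.2 (by positivity)
    rw [← Complex.ofReal_add, Complex.Gamma_ofReal, Complex.Gamma_ofReal, Complex.Gamma_ofReal,
      add_comm b] at h
    push_cast
    rw [eq_div_iff hΓ, mul_comm _ (Gamma (a + b) : ℂ), ← h, mul_comm]
  apply Complex.ofReal_injective
  rw [← intervalIntegral.integral_ofReal, intervalIntegral.integral_congr hcongr,
    Complex.betaIntegral_scaled _ _ ht, hB, Complex.ofReal_mul, Complex.ofReal_cpow ht.le,
    mul_comm]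
  push_cast
  ring_nf

theorem intervalIntegrable_sub_rpow_mul_rpow {a b t : ℝ} (ha : 0 < a) (hb : 0 < b) (ht : 0 < t) :
    IntervalIntegrable (fun u => (t - u) ^ (a - 1) * u ^ (b - 1)) volume 0 t :=
  -- a non-integrable function has integral `0`, but the Beta value is positive
  intervalIntegral.intervalIntegrable_of_integral_ne_zero <| by
    rw [integral_sub_rpow_mul_rpow ha hb ht]
    positivity

theorem rlInt_congr {ν t : ℝ} (ht : 0 ≤ t) {f g : ℝ → ℝ} (hfg : EqOn f g (Ioc 0 t)) :
    rlInt ν f t = rlInt ν g t := by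
  simp only [rlInt, intervalIntegral.integral_of_le ht]
  congr 1
  exact setIntegral_congr_fun measurableSet_Ioc fun u hu => by rw [hfg hu]

theorem rlInt_const_mul (ν C : ℝ) (f : ℝ → ℝ) (t : ℝ) :
    rlInt ν (fun u => C * f u) t = C * rlInt ν f t := by
  simp only [rlInt, mul_left_comm _ C, intervalIntegral.integral_const_mul]

theorem rlInt_tsum_rpow {ν t : ℝ} (hν : 0 < ν) (ht : 0 < t) {a β : ℕ → ℝ} (hβ : ∀ k, 0 < β k)
    (hsum : Summable fun k => |a k| * (Gamma (β k) / Gamma (β k + ν) * t ^ (β k + ν - 1)))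
    {f : ℝ → ℝ} (hf : ∀ u ∈ Ioc 0 t, f u = ∑' k, a k * u ^ (β k - 1)) :
    rlInt ν f t = ∑' k, a k * (Gamma (β k) / Gamma (β k + ν) * t ^ (β k + ν - 1)) := by
  set F : ℕ → ℝ → ℝ := fun k u => a k * ((t - u) ^ (ν - 1) * u ^ (β k - 1))
  have hbeta : ∀ k, ∫ u in Ioc 0 t, (t - u) ^ (ν - 1) * u ^ (β k - 1) =
      Gamma ν * (Gamma (β k) / Gamma (β k + ν) * t ^ (β k + ν - 1)) := fun k => by
    rw [← intervalIntegral.integral_of_le ht.le, integral_sub_rpow_mul_rpow hν (hβ k) ht,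
      add_comm ν]
    ring
  have hF_int : ∀ k, Integrable (F k) (volume.restrict (Ioc 0 t)) := fun k =>
    ((intervalIntegrable_sub_rpow_mul_rpow hν (hβ k) ht).1).const_mul (a k)
  have hF_norm : ∀ k, ∫ u in Ioc 0 t, ‖F k u‖ =
      Gamma ν * (|a k| * (Gamma (β k) / Gamma (β k + ν) * t ^ (β k + ν - 1))) := fun k => by
    rw [mul_left_comm, ← hbeta, ← integral_const_mul]
    refine setIntegral_congr_fun measurableSet_Ioc fun u hu => ?_
    have h₁ : 0 ≤ (t - u) ^ (ν - 1) := rpow_nonneg (sub_nonneg.2 hu.2) _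
    have h₂ : 0 ≤ u ^ (β k - 1) := rpow_nonneg hu.1.le _
    simp only [F, norm_mul, Real.norm_eq_abs, abs_of_nonneg h₁, abs_of_nonneg h₂]
  have hF_sum : Summable fun k => ∫ u in Ioc 0 t, ‖F k u‖ := by
    simpa only [hF_norm] using hsum.mul_left (Gamma ν)
  have hΓν : Gamma ν ≠ 0 := by positivity
  calc rlInt ν f t = 1 / Gamma ν * ∫ u in Ioc 0 t, ∑' k, F k u := by
        rw [rlInt, intervalIntegral.integral_of_le ht.le]
        congr 1
        refine setIntegral_congr_fun measurableSet_Ioc fun u hu => ?_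
        simp only [F, hf u hu, ← tsum_mul_left, mul_left_comm]
    _ = 1 / Gamma ν *
          ∑' k, a k * (Gamma ν * (Gamma (β k) / Gamma (β k + ν) * t ^ (β k + ν - 1))) := by
        rw [← integral_tsum_of_summable_integral_norm hF_int hF_sum]
        simp only [F, integral_const_mul, hbeta]
    _ = _ := by
        rw [← tsum_mul_left]
        congr 1 with k
        field_simp

theorem rpow_mul_mittagLeffler2_eq_tsum (ν ρ a : ℝ) {u : ℝ} (hu : 0 < u) :
    u ^ (ρ - 1) * mittagLeffler2 ν ρ (a * u ^ ν) =
      ∑' k : ℕ, a ^ k / Gamma (ν * k + ρ) * u ^ (ν * k + ρ - 1) := by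
  rw [mittagLeffler2, ← tsum_mul_left]
  congr 1 with k
  rw [mul_pow, ← rpow_natCast (u ^ ν), ← rpow_mul hu.le, sub_eq_add_neg (ν * k + ρ),
    add_assoc, rpow_add hu, ← sub_eq_add_neg]
  ring

theorem mul_rlInt_rpow_mul_mittagLeffler2 {ν ρ t : ℝ} (hν : 0 < ν) (hρ : 0 < ρ) (ht : 0 < t)
    (a : ℝ) :
    a * rlInt ν (fun u => u ^ (ρ - 1) * mittagLeffler2 ν ρ (a * u ^ ν)) t =
      t ^ (ρ - 1) * (mittagLeffler2 ν ρ (a * t ^ ν) - 1 / Gamma ρ) := by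
  have hpow : ∀ k : ℕ, t ^ (ν * k + ρ + ν - 1) = (t ^ ν) ^ k * t ^ (ρ + ν - 1) := fun k => by
    rw [← rpow_natCast (t ^ ν), ← rpow_mul ht.le, ← rpow_add ht]
    ring_nf
  have hterm : ∀ k : ℕ, a ^ k / Gamma (ν * k + ρ) *
      (Gamma (ν * k + ρ) / Gamma (ν * k + ρ + ν) * t ^ (ν * k + ρ + ν - 1)) =
      t ^ (ρ + ν - 1) * ((a * t ^ ν) ^ k / Gamma (ν * k + (ρ + ν))) := fun k => by
    have : Gamma (ν * k + ρ) ≠ 0 := by positivity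
    rw [hpow, ← add_assoc]
    field_simp
    ring
  have hsum : Summable fun k : ℕ => |a ^ k / Gamma (ν * k + ρ)| *
      (Gamma (ν * k + ρ) / Gamma (ν * k + ρ + ν) * t ^ (ν * k + ρ + ν - 1)) := by
    refine ((summable_pow_div_Gamma hν (ρ + ν) (a * t ^ ν)).mul_left (t ^ (ρ + ν - 1))).abs.congr
      fun k => ?_
    have : 0 < Gamma (ν * k + ρ) / Gamma (ν * k + ρ + ν) * t ^ (ν * k + ρ + ν - 1) := by
      positivity
    rw [← hterm, abs_mul, abs_of_pos this]
  rw [rlInt_tsum_rpow hν ht (fun k => by positivity) hsum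
      fun u hu => rpow_mul_mittagLeffler2_eq_tsum ν ρ a hu.1,
    mittagLeffler2, (summable_pow_div_Gamma hν ρ (a * t ^ ν)).tsum_eq_zero_add, ← tsum_mul_left]
  simp only [hterm, pow_zero, CharP.cast_eq_zero, mul_zero, zero_add, add_sub_cancel_left,
    ← tsum_mul_left]
  congr 1 with k
  rw [show ρ + ν - 1 = ρ - 1 + ν by ring, rpow_add ht, pow_succ]
  push_cast
  ring_nf

theorem kinetic_power_solution_ml (ρ ν c : ℝ) (hρ : 0 < ρ) (hν : 0 < ν) (hc : 0 < c) (N₀ : ℝ)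
    (N : ℝ → ℝ) (hN : N = fun t => N₀ * Real.Gamma ρ * t ^ (ρ - 1) * mittagLeffler2 ν ρ (-(c * t) ^ ν)) :
    ∀ t : ℝ, 0 < t → N t - N₀ * t ^ (ρ - 1) = -(c ^ ν) * rlInt ν N t := by
  intro t ht
  have hN' : EqOn N (fun u => N₀ * Gamma ρ *
      (u ^ (ρ - 1) * mittagLeffler2 ν ρ (-(c ^ ν) * u ^ ν))) (Ioc 0 t) := fun u hu => by
    simp only [hN, mul_rpow hc.le hu.1.le]
    ring_nf
  have hΓρ : Gamma ρ ≠ 0 := by positivity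
  calc N t - N₀ * t ^ (ρ - 1)
      = N₀ * Gamma ρ * (t ^ (ρ - 1) * (mittagLeffler2 ν ρ (-(c ^ ν) * t ^ ν) - 1 / Gamma ρ)) := by
        rw [hN' ⟨ht, le_rfl⟩]
        field_simp
    _ = -(c ^ ν) * rlInt ν N t := by
        rw [← mul_rlInt_rpow_mul_mittagLeffler2 hν hρ ht, rlInt_congr ht.le hN', rlInt_const_mul]
        ring
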